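/- Let G be a finite simple connected undirected graph on n ≥ 2 vertices whose normalized Laplacian 𝓛 has eigenvalues 0 = λ₀ < λ₁ ≤ … ≤ λ_{n−1} ≤ 2, and for η ∈ [0,1) define g(η) = max_{i=1,…,n−1} |η + (1−η)(1 − λᵢ)|. If ς := (λ₁ + λ_{n−1})/2 ≤ 1, then g is uniquely minimized over [0,1) at η* = 0, and the minimum value is g(0) = 1 − λ₁. -/

import Mathlib

/-- Let `G` be a finite simple connected graph on `n ≥ 2` vertices whose
normalized Laplacian `𝓛 = I - D^{-1/2} A D^{-1/2}` has eigenvalues (listed with multiplicity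
in increasing order, via a diagonalization) `0 = λ₀ < λ₁ ≤ … ≤ λ_{n-1} ≤ 2`, and for
`η ∈ [0,1)` let `g(η) = max_{i=1,…,n-1} |η + (1-η)(1-λᵢ)|`. If `ς = (λ₁ + λ_{n-1})/2 ≤ 1`,
then `g` is uniquely minimized over `[0,1)` at `η* = 0`, and `g(0) = 1 - λ₁`. -/
theorem stmt_9 {n : ℕ} (hn : 2 ≤ n) (G : SimpleGraph (Fin n)) [DecidableRel G.Adj]
    (hconn : G.Connected)
    (lam : Fin n → ℝ) (hmono : Monotone lam)
    (hlam0 : lam ⟨0, by omega⟩ = 0) (hlam1 : 0 < lam ⟨1, by omega⟩)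
    (hlamtop : lam ⟨n - 1, by omega⟩ ≤ 2)
    (hdiag : ∃ P : Matrix (Fin n) (Fin n) ℝ, IsUnit P.det ∧
      ((1 : Matrix (Fin n) (Fin n) ℝ)
          - (Matrix.diagonal fun i => (Real.sqrt (G.degree i))⁻¹) * G.adjMatrix ℝ
              * (Matrix.diagonal fun i => (Real.sqrt (G.degree i))⁻¹)) * P
        = P * Matrix.diagonal lam)
    (g : ℝ → ℝ)
    (hg : ∀ η : ℝ, g η = Finset.sup' (Finset.univ.erase (⟨0, by omega⟩ : Fin n))
      ⟨⟨1, by omega⟩, by simp [Finset.mem_erase, Fin.ext_iff]⟩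
      fun i => |η + (1 - η) * (1 - lam i)|)
    (hς : (lam ⟨1, by omega⟩ + lam ⟨n - 1, by omega⟩) / 2 ≤ 1) :
    (∀ η ∈ Set.Ico (0 : ℝ) 1, η ≠ 0 → g 0 < g η)
    ∧ g 0 = 1 - lam ⟨1, by omega⟩ := by
  have h1n : (1:ℕ) ≤ n - 1 := by omega
  set a := lam ⟨1, by omega⟩ with ha
  set b := lam ⟨n-1, by omega⟩ with hb
  have hab : a ≤ b := hmono (by simp [Fin.le_def]; omega)
  have ha1 : a ≤ 1 := by linarith
  have hmem1 : (⟨1, by omega⟩ : Fin n) ∈ Finset.univ.erase (⟨0, by omega⟩ : Fin n) := by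
    simp [Finset.mem_erase, Fin.ext_iff]
  have hbound : ∀ i : Fin n, i ∈ Finset.univ.erase (⟨0, by omega⟩ : Fin n) →
      a ≤ lam i ∧ lam i ≤ b := by
    intro i hi
    simp [Finset.mem_erase, Fin.ext_iff] at hi
    constructor
    · exact hmono (by simp [Fin.le_def]; omega)
    · exact hmono (by simp [Fin.le_def]; omega)
  have hg0 : g 0 = 1 - a := by
    rw [hg 0]
    apply le_antisymm
    · apply Finset.sup'_le
      intro i hi
      obtain ⟨h1, h2⟩ := hbound i hi
      rw [abs_le]
      constructor <;> [skip; skip] <;> · simp; linarith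
    · refine le_trans ?_ (Finset.le_sup' _ hmem1)
      simp [abs_of_nonneg (by linarith : (0:ℝ) ≤ 1 - a)]
      linarith [le_abs_self (1 - lam ⟨1, by omega⟩), ha]
  refine ⟨?_, hg0⟩
  intro η hη hne
  obtain ⟨hη0, hη1⟩ := hη
  have hη0' : 0 < η := lt_of_le_of_ne hη0 (Ne.symm hne)
  rw [hg0, hg η]
  refine lt_of_lt_of_le ?_ (Finset.le_sup' _ hmem1)
  have hpos : 0 ≤ η + (1 - η) * (1 - a) := by nlinarith
  rw [abs_of_nonneg hpos]
  nlinarith
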